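/- arXiv:2410.15474 — 2 statements merged into one kernel-verified Lean document; each statement's English description precedes it below -/
import Mathlib

section
/- Any global minimizer (P_F, P_B) of the joint objective KL(P^{P_F} ‖ P^{P_B}) over forward and backward policies achieves value 0 and satisfies the trajectory balance constraint, hence P_F induces the marginal distribution R(x)/Z over terminal states. -/
open scoped BigOperators Classical ENNReal

noncomputable section

def pairProd {S : Type*} (f : S → S → ℝ) : List S → ℝ
  | [] => 1
  | [_] => 1
  | a :: b :: l => f a b * pairProd f (b :: l)

def IsForwardPolicy {S : Type*} [Fintype S] (E : S → S → Prop) (term : S → Prop)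
    (PF : S → S → ℝ) : Prop :=
  (∀ s s', 0 ≤ PF s s') ∧ (∀ s s', PF s s' ≠ 0 → E s s') ∧
    (∀ s, ¬ term s → ∑ s' : S, PF s s' = 1)

def IsBackwardPolicy {S : Type*} [Fintype S] (E : S → S → Prop) (s0 : S)
    (PB : S → S → ℝ) : Prop :=
  (∀ s' s, 0 ≤ PB s' s) ∧ (∀ s' s, PB s' s ≠ 0 → E s s') ∧
    (∀ s', s' ≠ s0 → ∑ s : S, PB s' s = 1)

def bTraj {S : Type*} (R : S → ℝ) (Z : ℝ) (PB : S → S → ℝ) (l : List S) : ℝ :=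
  ((l.getLast?.map R).getD 0 / Z) * pairProd (fun a b => PB b a) l

/-- Extended-real KL divergence on a finite set, with the conventions
`0 log (0/q) = 0` and `KL = ⊤` when absolute continuity fails. -/
def klDivFin {α : Type*} (A : Finset α) (p q : α → ℝ) : ℝ≥0∞ :=
  if ∀ a ∈ A, q a = 0 → p a = 0 then
    ENNReal.ofReal (∑ a ∈ A, p a * Real.log (p a / q a))
  else ⊤

/-!
The backward trajectory distribution of `PB` is a probability distribution on complete
trajectories with terminal marginal `R/Z`: a backward policy is a forward policy of the reversed
graph, and a forward policy always induces a probability distribution on complete trajectories.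
The state flow `F` of this distribution is conserved, so the forward policy
`F(s') P_B(s|s') / F(s)` satisfies detailed balance and, by telescoping along a trajectory,
reproduces the backward distribution exactly. Hence the objective attains `0`; a minimizer then
has zero KL divergence between two probability distributions, which by Gibbs' inequality agree.
-/

open Finset InformationTheory

section

variable {S : Type*}

theorem pairProd_cons_of_head?_eq (f : S → S → ℝ) {a b : S} {l : List S} (h : l.head? = some b) :
    pairProd f (a :: l) = f a b * pairProd f l := by
  obtain ⟨t, rfl⟩ := List.head?_eq_some_iff.mp h
  rfl

theorem pairProd_nonneg {f : S → S → ℝ} (hf : ∀ a b, 0 ≤ f a b) : ∀ l, 0 ≤ pairProd f l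
  | [] => zero_le_one
  | [_] => zero_le_one
  | a :: b :: l => mul_nonneg (hf a b) (pairProd_nonneg hf (b :: l))

theorem pairProd_append_singleton (f : S → S → ℝ) :
    ∀ {l : List S} {a : S} (b : S), l.getLast? = some a →
      pairProd f (l ++ [b]) = pairProd f l * f a b
  | [], _, _, h => by simp at h
  | [c], a, b, h => by
    obtain rfl : c = a := by simpa using h
    simp [pairProd]
  | c :: d :: l, a, b, h => by
    rw [List.getLast?_cons_cons] at h
    change f c d * pairProd f (d :: l ++ [b]) = f c d * pairProd f (d :: l) * f a b
    rw [pairProd_append_singleton f b h, mul_assoc]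

theorem pairProd_reverse (f : S → S → ℝ) :
    ∀ l : List S, pairProd f l.reverse = pairProd (fun a b => f b a) l
  | [] => rfl
  | [_] => rfl
  | a :: b :: l => by
    rw [List.reverse_cons, pairProd_append_singleton f (a := b) a (by simp),
      pairProd_reverse f (b :: l), mul_comm]
    rfl

theorem mul_pairProd_eq_of_isChain {F : S → ℝ} {f g : S → S → ℝ} :
    ∀ {l : List S} {a x : S}, l.IsChain (fun a b => F a * f a b = F b * g b a) →
      l.head? = some a → l.getLast? = some x →
      F a * pairProd f l = F x * pairProd (fun a b => g b a) l
  | [], _, _, _, ha, _ => by simp at ha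
  | [c], a, x, _, ha, hx => by
    obtain rfl : c = a := by simpa using ha
    obtain rfl : c = x := by simpa using hx
    rfl
  | c :: d :: l, a, x, h, ha, hx => by
    obtain rfl : c = a := by simpa using ha
    rw [List.getLast?_cons_cons] at hx
    rw [List.isChain_cons_cons] at h
    have ih := mul_pairProd_eq_of_isChain h.2 rfl hx
    show F c * (f c d * pairProd f (d :: l)) = F x * (g d c * pairProd _ (d :: l))
    linear_combination pairProd f (d :: l) * h.1 + g d c * ih

section Trajectories

variable {E : S → S → Prop} {term : S → Prop}

def IsCompleteTraj (E : S → S → Prop) (term : S → Prop) (s : S) (l : List S) : Prop :=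
  l.head? = some s ∧ l.IsChain E ∧ ∃ x, l.getLast? = some x ∧ term x

theorem finite_setOf_isChain [Finite S] {rank : S → ℕ}
    (hrank : ∀ s s', E s s' → rank s < rank s') : {l : List S | l.IsChain E}.Finite := by
  have := Fintype.ofFinite S
  refine (List.finite_length_le S (Fintype.card S)).subset fun l hl => List.Nodup.length_le_card ?_
  have hsorted : (l.map rank).Pairwise (· < ·) :=
    List.isChain_iff_pairwise.mp (List.isChain_map_of_isChain rank hrank hl)
  exact List.Nodup.of_map rank (hsorted.imp ne_of_lt)

theorem exists_finset_isCompleteTraj (hfin : {l : List S | l.IsChain E}.Finite) (term : S → Prop) :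
    ∃ C : S → Finset (List S), ∀ s l, l ∈ C s ↔ IsCompleteTraj E term s l :=
  ⟨fun s => (hfin.subset fun _ hl => hl.2.1 : {l | IsCompleteTraj E term s l}.Finite).toFinset,
    fun _ _ => Set.Finite.mem_toFinset _⟩

variable {C : S → Finset (List S)}

theorem completeTraj_eq_singleton_of_term (hterm : ∀ s s', term s → ¬ E s s')
    (hC : ∀ s l, l ∈ C s ↔ IsCompleteTraj E term s l) {s : S} (hs : term s) : C s = {[s]} := by
  ext l
  rw [hC, mem_singleton]
  constructor
  · rintro ⟨hh, hl, -⟩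
    obtain ⟨_ | ⟨b, t⟩, rfl⟩ := List.head?_eq_some_iff.mp hh
    · rfl
    · exact absurd (List.isChain_cons_cons.mp hl).1 (hterm s b hs)
  · rintro rfl
    exact ⟨rfl, List.isChain_singleton s, s, rfl, hs⟩

theorem sum_completeTraj_of_not_term [Fintype S] {M : Type*} [AddCommMonoid M]
    (hC : ∀ s l, l ∈ C s ↔ IsCompleteTraj E term s l) {s : S} (hs : ¬ term s) (g : List S → M) :
    ∑ l ∈ C s, g l = ∑ s' with E s s', ∑ t ∈ C s', g (s :: t) := by
  rw [sum_sigma']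
  symm
  refine sum_bij (fun x _ => s :: x.2) ?_ ?_ ?_ (fun _ _ => rfl)
  · rintro ⟨s', t⟩ hx
    obtain ⟨hE, ht⟩ := mem_sigma.mp hx
    obtain ⟨hh, hl, x, hx, htx⟩ := (hC s' t).mp ht
    obtain ⟨t, rfl⟩ := List.head?_eq_some_iff.mp hh
    exact (hC s _).mpr
      ⟨rfl, List.isChain_cons_cons.mpr ⟨(mem_filter.mp hE).2, hl⟩, x, by simpa using hx, htx⟩
  · rintro ⟨s₁, t₁⟩ h₁ ⟨s₂, t₂⟩ h₂ h
    obtain rfl : t₁ = t₂ := (List.cons_injective h)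
    have e₁ := ((hC _ _).mp (mem_sigma.mp h₁).2).1
    have e₂ := ((hC _ _).mp (mem_sigma.mp h₂).2).1
    obtain rfl : s₁ = s₂ := Option.some_injective _ (e₁.symm.trans e₂)
    rfl
  · intro l hl
    obtain ⟨hh, hc, x, hx, htx⟩ := (hC s l).mp hl
    obtain ⟨_ | ⟨b, t⟩, rfl⟩ := List.head?_eq_some_iff.mp hh
    · obtain rfl : s = x := by simpa using hx
      exact absurd htx hs
    · obtain ⟨hE, hc⟩ := List.isChain_cons_cons.mp hc
      refine ⟨⟨b, b :: t⟩, mem_sigma.mpr ⟨mem_filter.mpr ⟨mem_univ _, hE⟩, ?_⟩, rfl⟩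
      exact (hC b _).mpr ⟨rfl, hc, x, by simpa using hx, htx⟩

end Trajectories

section Policies

variable [Fintype S] {E : S → S → Prop} {term : S → Prop} {C : S → Finset (List S)}

theorem sum_pairProd_eq_one_of_isForwardPolicy (hterm : ∀ s s', term s → ¬ E s s')
    (hwf : WellFounded (flip E)) {PF : S → S → ℝ} (hPF : IsForwardPolicy E term PF)
    (hC : ∀ s l, l ∈ C s ↔ IsCompleteTraj E term s l) (s : S) :
    ∑ l ∈ C s, pairProd PF l = 1 := by
  induction s using hwf.induction with
  | _ s ih =>
  by_cases hs : term s
  · rw [completeTraj_eq_singleton_of_term hterm hC hs, sum_singleton]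
    rfl
  · rw [sum_completeTraj_of_not_term hC hs]
    calc ∑ s' with E s s', ∑ t ∈ C s', pairProd PF (s :: t)
        = ∑ s' with E s s', PF s s' := by
          refine sum_congr rfl fun s' hs' => ?_
          rw [← mul_one (PF s s'), ← ih s' (mem_filter.mp hs').2, mul_sum]
          exact sum_congr rfl fun t ht => pairProd_cons_of_head?_eq PF ((hC s' t).mp ht).1
      _ = ∑ s', PF s s' := sum_filter_of_ne fun s' _ => hPF.2.1 s s'
      _ = 1 := hPF.2.2 s hs

theorem isBackwardPolicy_iff {s0 : S} {PB : S → S → ℝ} :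
    IsBackwardPolicy E s0 PB ↔ IsForwardPolicy (flip E) (· = s0) PB :=
  Iff.rfl

theorem sum_pairProd_flip_eq_one_of_isBackwardPolicy [DecidableEq S] {s0 : S}
    (hinit : ∀ s, ¬ E s s0) (hwf : WellFounded E) (hfin : {l : List S | l.IsChain E}.Finite) {PB : S → S → ℝ}
    (hPB : IsBackwardPolicy E s0 PB) (hC : ∀ s l, l ∈ C s ↔ IsCompleteTraj E term s l)
    {x : S} (hx : term x) :
    ∑ l ∈ C s0 with l.getLast? = some x, pairProd (fun a b => PB b a) l = 1 := by
  have hfin' : {l : List S | l.IsChain (flip E)}.Finite :=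
    (hfin.preimage List.reverse_injective.injOn).subset fun l hl =>
      List.isChain_reverse.mpr hl
  obtain ⟨D, hD⟩ := exists_finset_isCompleteTraj hfin' (· = s0)
  rw [← sum_pairProd_eq_one_of_isForwardPolicy (fun s s' hs => hs ▸ hinit s') hwf
    (isBackwardPolicy_iff.mp hPB) hD x]
  refine sum_nbij' List.reverse List.reverse ?_ ?_ (fun l _ => l.reverse_reverse)
    (fun l _ => l.reverse_reverse) fun l _ => (pairProd_reverse PB l).symm
  · intro l hl
    obtain ⟨hl, hlx⟩ := mem_filter.mp hl
    obtain ⟨hh, hc, -⟩ := (hC s0 l).mp hl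
    exact (hD x _).mpr ⟨by rw [List.head?_reverse, hlx], List.isChain_reverse.mpr hc, s0,
      by rw [List.getLast?_reverse, hh], rfl⟩
  · intro l hl
    obtain ⟨hh, hc, _, hl0, hs0⟩ := (hD x l).mp hl
    refine mem_filter.mpr ⟨(hC s0 _).mpr ⟨by rw [List.head?_reverse, hl0, hs0],
      List.isChain_reverse.mpr hc, x, ?_, hx⟩, ?_⟩ <;> rw [List.getLast?_reverse, hh]

end Policies

section Flow

variable {E : S → S → Prop} {term : S → Prop} {C : S → Finset (List S)}
  {R : S → ℝ} {Z : ℝ} {PB : S → S → ℝ}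

theorem bTraj_of_getLast?_eq {l : List S} {x : S} (h : l.getLast? = some x) :
    bTraj R Z PB l = R x / Z * pairProd (fun a b => PB b a) l := by
  simp [bTraj, h]

theorem bTraj_cons_of_head?_eq {a b : S} {l : List S} (h : l.head? = some b) :
    bTraj R Z PB (a :: l) = PB b a * bTraj R Z PB l := by
  obtain ⟨t, rfl⟩ := List.head?_eq_some_iff.mp h
  rw [bTraj, bTraj, List.getLast?_cons_cons, pairProd_cons_of_head?_eq _ h]
  ring

theorem bTraj_nonneg_of_isCompleteTraj (hR : ∀ x, term x → 0 ≤ R x) (hZ : 0 ≤ Z)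
    (hPB : ∀ s' s, 0 ≤ PB s' s) {s : S} {l : List S} (hl : IsCompleteTraj E term s l) :
    0 ≤ bTraj R Z PB l := by
  obtain ⟨-, -, x, hx, htx⟩ := hl
  rw [bTraj_of_getLast?_eq hx]
  exact mul_nonneg (div_nonneg (hR x htx) hZ) (pairProd_nonneg (fun a b => hPB b a) l)

def stateFlow (C : S → Finset (List S)) (R : S → ℝ) (Z : ℝ) (PB : S → S → ℝ) (s : S) : ℝ :=
  ∑ l ∈ C s, bTraj R Z PB l

theorem stateFlow_of_term (hterm : ∀ s s', term s → ¬ E s s')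
    (hC : ∀ s l, l ∈ C s ↔ IsCompleteTraj E term s l) {x : S} (hx : term x) :
    stateFlow C R Z PB x = R x / Z := by
  rw [stateFlow, completeTraj_eq_singleton_of_term hterm hC hx, sum_singleton, bTraj_of_getLast?_eq rfl]
  exact mul_one _

theorem stateFlow_eq_sum [Fintype S] (hC : ∀ s l, l ∈ C s ↔ IsCompleteTraj E term s l)
    (hPB : ∀ s' s, PB s' s ≠ 0 → E s s') {s : S} (hs : ¬ term s) :
    stateFlow C R Z PB s = ∑ s', stateFlow C R Z PB s' * PB s' s := by
  rw [stateFlow, sum_completeTraj_of_not_term hC hs,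
    ← sum_filter_of_ne fun s' _ h => hPB s' s (right_ne_zero_of_mul h)]
  refine sum_congr rfl fun s' _ => ?_
  rw [stateFlow, sum_mul]
  exact sum_congr rfl fun t ht => (bTraj_cons_of_head?_eq ((hC s' t).mp ht).1).trans (mul_comm _ _)

def flowForward (F : S → ℝ) (PB PF₀ : S → S → ℝ) (s s' : S) : ℝ :=
  if F s = 0 then PF₀ s s' else F s' * PB s' s / F s

variable [Fintype S] {F : S → ℝ} {PF₀ : S → S → ℝ}

theorem isForwardPolicy_flowForward {s0 : S} (hF : ∀ s, 0 ≤ F s)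
    (hcons : ∀ s, ¬ term s → F s = ∑ s', F s' * PB s' s) (hPB : IsBackwardPolicy E s0 PB)
    (hPF₀ : IsForwardPolicy E term PF₀) : IsForwardPolicy E term (flowForward F PB PF₀) := by
  refine ⟨fun s s' => ?_, fun s s' h => ?_, fun s hs => ?_⟩ <;> unfold flowForward at *
  · split_ifs
    exacts [hPF₀.1 s s', div_nonneg (mul_nonneg (hF s') (hPB.1 s' s)) (hF s)]
  · split_ifs at h
    exacts [hPF₀.2.1 s s' h, hPB.2.1 s' s (right_ne_zero_of_mul (left_ne_zero_of_mul h))]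
  · split_ifs with h0
    · exact hPF₀.2.2 s hs
    · rw [← sum_div, ← hcons s hs, div_self h0]

theorem mul_flowForward (hF : ∀ s, 0 ≤ F s) (hcons : ∀ s, ¬ term s → F s = ∑ s', F s' * PB s' s)
    (hPB : ∀ s' s, 0 ≤ PB s' s) {s : S} (hs : ¬ term s) (s' : S) :
    F s * flowForward F PB PF₀ s s' = F s' * PB s' s := by
  unfold flowForward
  split_ifs with h0
  · have hsum := (hcons s hs).symm.trans h0
    rw [sum_eq_zero_iff_of_nonneg fun s'' _ => mul_nonneg (hF s'') (hPB s'' s)] at hsum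
    rw [h0, zero_mul, hsum s' (mem_univ _)]
  · field_simp

theorem exists_isForwardPolicy_pairProd_eq_bTraj {s0 : S} (hterm : ∀ s s', term s → ¬ E s s')
    (hC : ∀ s l, l ∈ C s ↔ IsCompleteTraj E term s l) (hR : ∀ x, term x → 0 ≤ R x)
    (hZ : 0 ≤ Z) (hPB : IsBackwardPolicy E s0 PB) (hPF₀ : IsForwardPolicy E term PF₀)
    (hmass : ∑ l ∈ C s0, bTraj R Z PB l = 1) :
    ∃ PF, IsForwardPolicy E term PF ∧ ∀ l ∈ C s0, pairProd PF l = bTraj R Z PB l := by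
  set F := stateFlow C R Z PB
  have hF : ∀ s, 0 ≤ F s := fun s =>
    sum_nonneg fun l hl => bTraj_nonneg_of_isCompleteTraj hR hZ hPB.1 ((hC s l).mp hl)
  have hcons : ∀ s, ¬ term s → F s = ∑ s', F s' * PB s' s := fun s hs =>
    stateFlow_eq_sum hC hPB.2.1 hs
  refine ⟨flowForward F PB PF₀, isForwardPolicy_flowForward hF hcons hPB hPF₀, fun l hl => ?_⟩
  obtain ⟨hh, hc, x, hx, htx⟩ := (hC s0 l).mp hl
  have hbalance : l.IsChain (fun a b => F a * flowForward F PB PF₀ a b = F b * PB b a) :=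
    hc.imp fun a b hab => mul_flowForward hF hcons hPB.1 (fun ha => hterm a b ha hab) b
  have htelescope := mul_pairProd_eq_of_isChain hbalance hh hx
  rwa [show F s0 = 1 from hmass, one_mul, show F x = R x / Z from stateFlow_of_term hterm hC htx,
    ← bTraj_of_getLast?_eq hx] at htelescope

end Flow

section KL

variable {α : Type*} {A : Finset α} {p q : α → ℝ}

theorem klDivFin_eq_zero_of_eq (h : ∀ a ∈ A, p a = q a) : klDivFin A p q = 0 := by
  rw [klDivFin, if_pos fun a ha hq => (h a ha).trans hq, ENNReal.ofReal_eq_zero]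
  refine (sum_eq_zero fun a ha => ?_).le
  rw [h a ha]
  by_cases hq : q a = 0
  · simp [hq]
  · rw [div_self hq, Real.log_one, mul_zero]

theorem eq_of_klDivFin_eq_zero (hp : ∀ a ∈ A, 0 ≤ p a) (hq : ∀ a ∈ A, 0 ≤ q a)
    (hsum : ∑ a ∈ A, p a = ∑ a ∈ A, q a) (h : klDivFin A p q = 0) : ∀ a ∈ A, p a = q a := by
  have hac : ∀ a ∈ A, q a = 0 → p a = 0 := by
    by_contra hac
    simp [klDivFin, hac] at h
  rw [klDivFin, if_pos hac, ENNReal.ofReal_eq_zero] at h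
  have hklFun : ∀ a ∈ A,
      q a * klFun (p a / q a) = p a * Real.log (p a / q a) + q a - p a := by
    intro a ha
    by_cases hqa : q a = 0
    · simp [hqa, hac a ha hqa]
    · rw [klFun]
      field_simp
  have hnonneg : ∀ a ∈ A, 0 ≤ q a * klFun (p a / q a) := fun a ha =>
    mul_nonneg (hq a ha) (klFun_nonneg (div_nonneg (hp a ha) (hq a ha)))
  have hzero : ∑ a ∈ A, q a * klFun (p a / q a) = 0 := by
    refine le_antisymm ?_ (sum_nonneg hnonneg)
    rw [sum_congr rfl hklFun, sum_sub_distrib, sum_add_distrib]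
    linarith
  intro a ha
  have hterm := (sum_eq_zero_iff_of_nonneg hnonneg).mp hzero a ha
  rcases (hq a ha).eq_or_lt with hqa | hqa
  · rw [← hqa, hac a ha hqa.symm]
  · rw [mul_eq_zero, or_iff_right hqa.ne', klFun_eq_zero_iff (div_nonneg (hp a ha) hqa.le),
      div_eq_one_iff_eq hqa.ne'] at hterm
    exact hterm

end KL

section Marginal

variable [Fintype S] [DecidableEq S] {E : S → S → Prop} {term : S → Prop}
  {C : S → Finset (List S)} {s0 : S} {R : S → ℝ} {Z : ℝ} {PB : S → S → ℝ}

theorem sum_bTraj_getLast?_eq (hinit : ∀ s, ¬ E s s0) (hwf : WellFounded E)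
    (hfin : {l : List S | l.IsChain E}.Finite) (hPB : IsBackwardPolicy E s0 PB)
    (hC : ∀ s l, l ∈ C s ↔ IsCompleteTraj E term s l) {x : S} (hx : term x) :
    ∑ l ∈ C s0 with l.getLast? = some x, bTraj R Z PB l = R x / Z := by
  rw [sum_congr rfl fun l hl => bTraj_of_getLast?_eq (mem_filter.mp hl).2, ← mul_sum,
    sum_pairProd_flip_eq_one_of_isBackwardPolicy hinit hwf hfin hPB hC hx, mul_one]

theorem sum_bTraj_eq_one (hinit : ∀ s, ¬ E s s0) (hwf : WellFounded E)
    (hfin : {l : List S | l.IsChain E}.Finite) (hPB : IsBackwardPolicy E s0 PB)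
    (hC : ∀ s l, l ∈ C s ↔ IsCompleteTraj E term s l)
    (hZ : Z = ∑ x with term x, R x) (hZ0 : Z ≠ 0) :
    ∑ l ∈ C s0, bTraj R Z PB l = 1 := by
  have hlast : ∀ l ∈ C s0, l.getLast? ∈ ({x | term x} : Finset S).image some := fun l hl => by
    obtain ⟨-, -, x, hx, htx⟩ := (hC s0 l).mp hl
    exact mem_image.mpr ⟨x, mem_filter.mpr ⟨mem_univ x, htx⟩, hx.symm⟩
  rw [← sum_fiberwise_of_maps_to hlast, sum_image fun _ _ _ _ h => Option.some_injective _ h,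
    sum_congr rfl fun x hx => sum_bTraj_getLast?_eq hinit hwf hfin hPB hC (mem_filter.mp hx).2,
    ← sum_div, ← hZ, div_self hZ0]

end Marginal

end

theorem global_minimizer_trajectory_balance_general
    {S : Type*} [Fintype S] [DecidableEq S]
    (E : S → S → Prop) (s0 : S) (term : S → Prop)
    (hterm : ∀ s, term s ↔ ∀ s', ¬ E s s')
    (hinit : ∀ s, ¬ E s s0)
    (rank : S → ℕ) (hrank : ∀ s s', E s s' → rank s < rank s')
    (T : Finset (List S))
    (hT : ∀ l, l ∈ T ↔
      (l.head? = some s0 ∧ l.Chain' E ∧ ∃ x, l.getLast? = some x ∧ term x))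
    (R : S → ℝ) (hR : ∀ x, term x → 0 < R x)
    (Z : ℝ) (hZ : Z = ∑ x ∈ Finset.univ.filter term, R x) (hZpos : 0 < Z)
    (PF PB : S → S → ℝ)
    (hPF : IsForwardPolicy E term PF)
    (hPB : IsBackwardPolicy E s0 PB)
    (hmin : ∀ PF' PB' : S → S → ℝ, IsForwardPolicy E term PF' →
      IsBackwardPolicy E s0 PB' →
      klDivFin T (fun l => pairProd PF l) (fun l => bTraj R Z PB l)
        ≤ klDivFin T (fun l => pairProd PF' l) (fun l => bTraj R Z PB' l)) :
    klDivFin T (fun l => pairProd PF l) (fun l => bTraj R Z PB l) = 0 ∧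
    (∀ l ∈ T, pairProd PF l = bTraj R Z PB l) ∧
    (∀ x, term x →
      ∑ l ∈ T.filter (fun l => l.getLast? = some x), pairProd PF l = R x / Z) := by
  have hterm' : ∀ s s', term s → ¬ E s s' := fun s s' hs => (hterm s).mp hs s'
  have hwf : WellFounded E := Subrelation.wf (hrank _ _) (InvImage.wf rank wellFounded_lt)
  have hwf' : WellFounded (flip E) :=
    Subrelation.wf (hrank _ _) (Finite.wellFounded_of_trans_of_irrefl fun a b => rank b < rank a)
  have hfin := finite_setOf_isChain hrank
  obtain ⟨C, hC⟩ := exists_finset_isCompleteTraj hfin term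
  obtain rfl : T = C s0 := Finset.ext fun l => (hT l).trans (hC s0 l).symm
  have hq := sum_bTraj_eq_one hinit hwf hfin hPB hC hZ hZpos.ne'
  have hp := sum_pairProd_eq_one_of_isForwardPolicy hterm' hwf' hPF hC s0
  obtain ⟨PF', hPF', hPF'eq⟩ := exists_isForwardPolicy_pairProd_eq_bTraj hterm' hC
    (fun x hx => (hR x hx).le) hZpos.le hPB hPF hq
  have hzero : klDivFin (C s0) (fun l => pairProd PF l) (fun l => bTraj R Z PB l) = 0 :=
    le_antisymm ((hmin PF' PB hPF' hPB).trans_eq (klDivFin_eq_zero_of_eq hPF'eq)) zero_le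
  have hbalance := eq_of_klDivFin_eq_zero (fun l _ => pairProd_nonneg hPF.1 l)
    (fun l hl => bTraj_nonneg_of_isCompleteTraj (fun x hx => (hR x hx).le) hZpos.le hPB.1
      ((hC s0 l).mp hl)) (hp.trans hq.symm) hzero
  refine ⟨hzero, hbalance, fun x hx => ?_⟩
  rw [sum_congr rfl fun l hl => hbalance l (mem_filter.mp hl).1]
  exact sum_bTraj_getLast?_eq hinit hwf hfin hPB hC hx

/-- Any global minimizer of the joint KL objective over forward and backward
policies achieves value `0`, satisfies trajectory balance, and hence induces the
marginal distribution `R(x)/Z` over terminal states. -/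
theorem global_minimizer_trajectory_balance
    {S : Type*} [Fintype S] [DecidableEq S]
    (E : S → S → Prop) (s0 : S) (term : S → Prop)
    (hterm : ∀ s, term s ↔ ∀ s', ¬ E s s')
    (hinit : ∀ s, ¬ E s s0)
    (hreach : ∀ s, Relation.ReflTransGen E s0 s)
    (rank : S → ℕ) (hrank : ∀ s s', E s s' → rank s < rank s')
    (T : Finset (List S))
    (hT : ∀ l, l ∈ T ↔
      (l.head? = some s0 ∧ l.Chain' E ∧ ∃ x, l.getLast? = some x ∧ term x))
    (R : S → ℝ) (hR : ∀ x, term x → 0 < R x)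
    (Z : ℝ) (hZ : Z = ∑ x ∈ Finset.univ.filter term, R x) (hZpos : 0 < Z)
    (PF PB : S → S → ℝ)
    (hPF : IsForwardPolicy E term PF)
    (hPB : IsBackwardPolicy E s0 PB)
    (hmin : ∀ PF' PB' : S → S → ℝ, IsForwardPolicy E term PF' →
      IsBackwardPolicy E s0 PB' →
      klDivFin T (fun l => pairProd PF l) (fun l => bTraj R Z PB l)
        ≤ klDivFin T (fun l => pairProd PF' l) (fun l => bTraj R Z PB' l)) :
    klDivFin T (fun l => pairProd PF l) (fun l => bTraj R Z PB l) = 0 ∧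
    (∀ l ∈ T, pairProd PF l = bTraj R Z PB l) ∧
    (∀ x, term x →
      ∑ l ∈ T.filter (fun l => l.getLast? = some x), pairProd PF l = R x / Z) :=
  global_minimizer_trajectory_balance_general E s0 term hterm hinit rank hrank T hT R hR Z hZ hZpos
    PF PB hPF hPB hmin
end
end

section
/- The backward policy P_B(s|s') = n(s)/n(s') maximizes, over all backward policies, the entropy of the induced distribution over trajectories ending at any fixed terminal state x: under this policy, every directed path from s0 to x has equal probability 1/n(x), which is the maximum-entropy (uniform) distribution over such paths. -/
open scoped BigOperators Classical

noncomputable section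

/-! Along a path `s0 = v₀ → ⋯ → v_k = x` the ratios `n(v_{i-1}) / n(v_i)` telescope to
`n(s0) / n(x) = 1 / n(x)`. For any edge weight `w`, the sum `F(y)` over paths to `y` of the
product of the weights satisfies `F(s0) = 1` and `F(y) = ∑_{s → y} F(s) w(s, y)`. With `w ≡ 1`
this is the recursion defining `n`, so there are exactly `n(x)` paths to `x`; with `w` a backward
policy the constant `1` solves it, so the path probabilities sum to `1`. Jensen's inequality for
the concave `t ↦ -t log t` then bounds the entropy by `log n(x)`. -/

open Finset

theorem Real.neg_sum_mul_log_le_log_card {ι : Type*} {T : Finset ι} {p : ι → ℝ}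
    (hp : ∀ i ∈ T, 0 ≤ p i) (hsum : ∑ i ∈ T, p i = 1) :
    -∑ i ∈ T, p i * Real.log (p i) ≤ Real.log T.card := by
  have hT : T.Nonempty := Finset.nonempty_of_sum_ne_zero (by rw [hsum]; exact one_ne_zero)
  have hN : (0 : ℝ) < T.card := by exact_mod_cast hT.card_pos
  have hJensen := Real.concaveOn_negMulLog.le_map_sum (t := T) (w := fun _ => 1 / (T.card : ℝ))
    (p := p) (fun _ _ => by positivity) (by simp [hN.ne']) hp
  simp only [smul_eq_mul, ← Finset.mul_sum, hsum, Real.negMulLog, one_div, mul_one, Real.log_inv,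
    neg_mul, mul_neg, neg_neg, Finset.sum_neg_distrib] at hJensen
  exact le_of_mul_le_mul_left (by rwa [mul_neg]) (inv_pos.2 hN)

namespace pairProd

variable {S : Type*}

theorem nonneg {f : S → S → ℝ} (hf : ∀ a b, 0 ≤ f a b) : ∀ l : List S, 0 ≤ pairProd f l
  | [] => zero_le_one
  | [_] => zero_le_one
  | a :: b :: l => mul_nonneg (hf a b) (nonneg hf (b :: l))

theorem const_one : ∀ l : List S, pairProd (fun _ _ => 1) l = 1
  | [] => rfl
  | [_] => rfl
  | _ :: b :: l => by rw [pairProd, const_one (b :: l), one_mul]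

theorem append_singleton (f : S → S → ℝ) (y : S) :
    ∀ (m : List S) (s : S), m.getLast? = some s →
      pairProd f (m ++ [y]) = pairProd f m * f s y
  | [], _, h => by simp at h
  | [a], s, h => by
      obtain rfl : a = s := by simpa using h
      simp [pairProd]
  | a :: b :: l, s, h => by
      rw [List.getLast?_cons_cons] at h
      have ih := append_singleton f y (b :: l) s h
      simp only [List.cons_append, pairProd] at ih ⊢
      rw [ih, mul_assoc]

theorem div_telescope {f : S → ℝ} :
    ∀ (l : List S) (a y : S), (∀ s ∈ l, f s ≠ 0) → l.head? = some a → l.getLast? = some y →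
      pairProd (fun a b => f a / f b) l = f a / f y
  | [], _, _, _, h, _ => by simp at h
  | [c], a, y, hf, ha, hy => by
      obtain ⟨rfl, rfl⟩ : c = a ∧ c = y := by simp_all
      rw [div_self (hf c (List.mem_singleton_self c))]
      rfl
  | c :: b :: l, a, y, hf, ha, hy => by
      obtain rfl : c = a := by simpa using ha
      rw [List.getLast?_cons_cons] at hy
      rw [pairProd, div_telescope (b :: l) b y (fun s hs => hf s (List.mem_cons_of_mem c hs))
        rfl hy, div_mul_div_cancel₀ (hf b (by simp))]

end pairProd

section Paths

variable {S : Type*} {E : S → S → Prop} {s0 : S}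

def IsPathTo (E : S → S → Prop) (s0 y : S) (l : List S) : Prop :=
  l.head? = some s0 ∧ l.IsChain E ∧ l.getLast? = some y

theorem isPathTo_singleton {a y : S} : IsPathTo E s0 y [a] ↔ a = s0 ∧ a = y := by
  simp [IsPathTo, eq_comm]

theorem isPathTo_append_singleton {m : List S} (hm : m ≠ []) {b y : S} :
    IsPathTo E s0 y (m ++ [b]) ↔ b = y ∧ ∃ s, IsPathTo E s0 s m ∧ E s b := by
  simp [IsPathTo, List.head?_append_of_ne_nil _ hm, List.isChain_append,
    List.getLast?_eq_some_getLast hm]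
  tauto

theorem IsPathTo.forall_mem {p : S → Prop} {y : S} {l : List S} (hl : IsPathTo E s0 y l)
    (h0 : p s0) (hp : ∀ a b, E a b → p a → p b) : ∀ s ∈ l, p s :=
  hl.2.1.induction p l hp fun hne => by
    rwa [(List.head_eq_iff_head?_eq_some hne).mpr hl.1]

theorem IsPathTo.pos_of_rec [Fintype S] {n : S → ℕ} (hn0 : n s0 = 1)
    (hnrec : ∀ y, y ≠ s0 → n y = ∑ s ∈ univ.filter (E · y), n s) {y : S} {l : List S}
    (hl : IsPathTo E s0 y l) : ∀ s ∈ l, 0 < n s :=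
  hl.forall_mem (by omega) fun a b hab ha => by
    by_cases hb : b = s0
    · rw [hb, hn0]; exact one_pos
    · rw [hnrec b hb]
      exact ha.trans_le (single_le_sum (fun _ _ => Nat.zero_le _) (by simpa using hab))

variable [Fintype S]

variable (E s0) in
def pathsTo (rank : S → ℕ) (hrank : ∀ s s', E s s' → rank s < rank s') (y : S) :
    Finset (List S) :=
  if y = s0 then {[s0]}
  else (univ.filter (E · y)).attach.biUnion fun s => (pathsTo rank hrank s.1).image (· ++ [y])
termination_by rank y
decreasing_by exact hrank _ _ (mem_filter.mp s.2).2

variable {rank : S → ℕ} {hrank : ∀ s s', E s s' → rank s < rank s'}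

theorem getLast?_of_mem_pathsTo {y : S} {l : List S} (hl : l ∈ pathsTo E s0 rank hrank y) :
    l.getLast? = some y := by
  rw [pathsTo] at hl
  split_ifs at hl with hy
  · simp_all
  · obtain ⟨s, -, m, -, rfl⟩ := by simpa using hl
    simp

theorem mem_pathsTo (hinit : ∀ s, ¬ E s s0) (y : S) (l : List S) :
    l ∈ pathsTo E s0 rank hrank y ↔ IsPathTo E s0 y l := by
  induction y using (measure rank).wf.induction generalizing l with
  | _ y ih =>
  rw [pathsTo]
  rcases l.eq_nil_or_concat' with rfl | ⟨m, b, rfl⟩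
  · split_ifs <;> simp [IsPathTo]
  rcases eq_or_ne m [] with rfl | hm
  · rw [List.nil_append, isPathTo_singleton]
    split_ifs with hy
    · simp [hy]
    · refine iff_of_false ?_ fun h => hy (h.2 ▸ h.1)
      simp only [mem_biUnion, mem_image, not_exists, not_and]
      intro s _ m' hm' h
      have hlast := getLast?_of_mem_pathsTo hm'
      obtain rfl : m' = [] := by simpa using congrArg List.length h
      simp at hlast
  · rw [isPathTo_append_singleton hm]
    split_ifs with hy
    · subst hy
      refine iff_of_false (fun h => hm ?_) fun ⟨hb, s, _, hs⟩ => hinit s (hb ▸ hs)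
      exact (List.append_singleton_inj.mp ((mem_singleton.mp h).trans (List.nil_append _).symm)).1
    · simp only [mem_biUnion, mem_attach, mem_image, true_and, Subtype.exists, mem_filter,
        mem_univ, List.append_singleton_inj]
      constructor
      · rintro ⟨s, hs, m, hms, rfl, rfl⟩
        exact ⟨rfl, s, (ih s (hrank s _ hs) m).mp hms, hs⟩
      · rintro ⟨rfl, s, hms, hs⟩
        exact ⟨s, hs, m, (ih s (hrank s _ hs) m).mpr hms, rfl, rfl⟩

theorem sum_pathsTo_of_ne {y : S} (hy : y ≠ s0) (g : List S → ℝ) :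
    ∑ l ∈ pathsTo E s0 rank hrank y, g l =
      ∑ s ∈ univ.filter (E · y), ∑ m ∈ pathsTo E s0 rank hrank s, g (m ++ [y]) := by
  rw [pathsTo, if_neg hy, sum_biUnion, ← sum_attach (univ.filter (E · y))]
  · refine sum_congr rfl fun s _ => sum_image fun m _ m' _ h => List.append_cancel_right h
  · intro s _ t _ hst
    simp only [Function.onFun, disjoint_left, mem_image]
    rintro _ ⟨m, hm, rfl⟩ ⟨m', hm', hmm'⟩
    obtain rfl := List.append_cancel_right hmm'
    have := (getLast?_of_mem_pathsTo hm).symm.trans (getLast?_of_mem_pathsTo hm')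
    exact hst (Subtype.ext (Option.some_injective _ this))

theorem sum_pathsTo_pairProd_eq (w : S → S → ℝ) (g : S → ℝ) (hg0 : g s0 = 1)
    (hg : ∀ y, y ≠ s0 → g y = ∑ s ∈ univ.filter (E · y), g s * w s y) (y : S) :
    ∑ l ∈ pathsTo E s0 rank hrank y, pairProd w l = g y := by
  induction y using (measure rank).wf.induction with
  | _ y ih =>
  by_cases hy : y = s0
  · subst hy
    rw [pathsTo, if_pos rfl, sum_singleton, hg0]
    rfl
  rw [sum_pathsTo_of_ne hy, hg y hy]
  refine sum_congr rfl fun s hs => ?_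
  have hsy : E s y := (mem_filter.mp hs).2
  rw [← ih s (hrank s y hsy), sum_mul]
  exact sum_congr rfl fun m hm =>
    pairProd.append_singleton w y m s (getLast?_of_mem_pathsTo hm)

theorem card_pathsTo {n : S → ℕ} (hn0 : n s0 = 1)
    (hnrec : ∀ y, y ≠ s0 → n y = ∑ s ∈ univ.filter (E · y), n s) (y : S) :
    #(pathsTo E s0 rank hrank y) = n y := by
  have := sum_pathsTo_pairProd_eq (s0 := s0) (hrank := hrank) (fun _ _ => 1) (fun s => (n s : ℝ))
    (by simp [hn0]) (fun y hy => by simp [hnrec y hy]) y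
  simp only [pairProd.const_one, sum_const, nsmul_eq_mul, mul_one] at this
  exact_mod_cast this

theorem IsBackwardPolicy.sum_pathsTo_pairProd {PB : S → S → ℝ} (hPB : IsBackwardPolicy E s0 PB)
    (y : S) : ∑ l ∈ pathsTo E s0 rank hrank y, pairProd (fun a b => PB b a) l = 1 := by
  refine sum_pathsTo_pairProd_eq _ (fun _ => 1) rfl (fun y hy => ?_) y
  simp only [one_mul]
  rw [sum_filter_of_ne fun s _ h => hPB.2.1 y s h, hPB.2.2 y hy]

end Paths

theorem maxent_backward_uniform_paths_general
    {S : Type*} [Fintype S]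
    (E : S → S → Prop) (s0 : S)
    (hinit : ∀ s, ¬ E s s0)
    (rank : S → ℕ) (hrank : ∀ s s', E s s' → rank s < rank s')
    (n : S → ℕ) (hn0 : n s0 = 1)
    (hnrec : ∀ s', s' ≠ s0 → n s' = ∑ s ∈ Finset.univ.filter (fun s => E s s'), n s)
    (x : S)
    (Tx : Finset (List S))
    (hTx : ∀ l, l ∈ Tx ↔ (l.head? = some s0 ∧ l.Chain' E ∧ l.getLast? = some x)) :
    -- under P_B(s|s') = n(s)/n(s'), every path from s0 to x has probability 1/n(x)
    (∀ l ∈ Tx, pairProd (fun a b => (n a : ℝ) / (n b : ℝ)) l = 1 / (n x : ℝ)) ∧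
    -- and this (uniform) distribution maximizes the entropy over trajectories
    -- ending at x: any backward policy achieves entropy at most log n(x)
    (∀ PB : S → S → ℝ, IsBackwardPolicy E s0 PB →
      - ∑ l ∈ Tx, pairProd (fun a b => PB b a) l *
          Real.log (pairProd (fun a b => PB b a) l) ≤ Real.log (n x)) := by
  have hTx_eq : Tx = pathsTo E s0 rank hrank x := by
    ext l
    exact (hTx l).trans (mem_pathsTo hinit x l).symm
  refine ⟨fun l hl => ?_, fun PB hPB => ?_⟩
  · have hpath : IsPathTo E s0 x l := (hTx l).mp hl
    have hn_ne : ∀ s ∈ l, (n s : ℝ) ≠ 0 := fun s hs =>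
      Nat.cast_ne_zero.mpr (hpath.pos_of_rec hn0 hnrec s hs).ne'
    rw [pairProd.div_telescope l s0 x hn_ne hpath.1 hpath.2.2, hn0, Nat.cast_one]
  · rw [hTx_eq, ← card_pathsTo hn0 hnrec x]
    exact Real.neg_sum_mul_log_le_log_card (fun l _ => pairProd.nonneg (fun a b => hPB.1 b a) l)
      (hPB.sum_pathsTo_pairProd x)

/-- The backward policy `P_B(s|s') = n(s)/n(s')` induces the uniform distribution
over the paths from `s0` to any fixed terminal state `x`: every such path gets
probability `1/n(x)`, and this is the maximum-entropy distribution, i.e. the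
entropy of the trajectory distribution induced by any backward policy is at
most `log n(x)`, the entropy achieved by this one. -/
theorem maxent_backward_uniform_paths
    {S : Type*} [Fintype S] [DecidableEq S]
    (E : S → S → Prop) (s0 : S)
    (hinit : ∀ s, ¬ E s s0)
    (hreach : ∀ s, Relation.ReflTransGen E s0 s)
    (rank : S → ℕ) (hrank : ∀ s s', E s s' → rank s < rank s')
    (n : S → ℕ) (hn0 : n s0 = 1)
    (hnrec : ∀ s', s' ≠ s0 → n s' = ∑ s ∈ Finset.univ.filter (fun s => E s s'), n s)
    (x : S) (hx : ∀ s', ¬ E x s')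
    (Tx : Finset (List S))
    (hTx : ∀ l, l ∈ Tx ↔ (l.head? = some s0 ∧ l.Chain' E ∧ l.getLast? = some x)) :
    -- under P_B(s|s') = n(s)/n(s'), every path from s0 to x has probability 1/n(x)
    (∀ l ∈ Tx, pairProd (fun a b => (n a : ℝ) / (n b : ℝ)) l = 1 / (n x : ℝ)) ∧
    -- and this (uniform) distribution maximizes the entropy over trajectories
    -- ending at x: any backward policy achieves entropy at most log n(x)
    (∀ PB : S → S → ℝ, IsBackwardPolicy E s0 PB →
      - ∑ l ∈ Tx, pairProd (fun a b => PB b a) l *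
          Real.log (pairProd (fun a b => PB b a) l) ≤ Real.log (n x)) :=
  maxent_backward_uniform_paths_general E s0 hinit rank hrank n hn0 hnrec x Tx hTx
end
end
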